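/- arXiv:0909.3548 — 4 statements merged into one kernel-verified Lean document; each statement's English description precedes it below -/
import Mathlib

section
/- Let F : ℝ → ℝ be continuous with F(s) ≥ c(1-|s|)² for some c > 0, and let Q(s) = ∫_0^s √(2F(σ)) dσ. Then there exists a constant c' > 0 such that |Q(b) - Q(a)| ≥ c'(b-a)² for all real a ≤ b. -/
open intervalIntegral

private lemma int_lin1 (K p q : ℝ) :
    (∫ σ in p..q, K * (σ - p)) = K * (q - p)^2 / 2 := by
  rw [intervalIntegral.integral_const_mul]
  have h : (∫ σ in p..q, (σ - p)) = (q^2 - p^2)/2 - p*(q-p) := by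
    rw [intervalIntegral.integral_sub intervalIntegrable_id intervalIntegrable_const,
      integral_id, integral_const]
    simp [smul_eq_mul]; ring
  rw [h]; ring

private lemma int_lin2 (K p q : ℝ) :
    (∫ σ in p..q, K * (q - σ)) = K * (q - p)^2 / 2 := by
  rw [intervalIntegral.integral_const_mul]
  have h : (∫ σ in p..q, (q - σ)) = q*(q-p) - (q^2 - p^2)/2 := by
    rw [intervalIntegral.integral_sub intervalIntegrable_const intervalIntegrable_id,
      integral_id, integral_const]
    simp [smul_eq_mul]; ring
  rw [h]; ring

private lemma step1 (f : ℝ → ℝ) (hfc : Continuous f) (hfnn : ∀ σ, 0 ≤ f σ)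
    (K a b p q : ℝ) (hap : a ≤ p) (hpq : p ≤ q) (hqb : q ≤ b)
    (hbd : ∀ σ ∈ Set.Icc p q, K * (σ - p) ≤ f σ) :
    K * (q - p)^2 / 2 ≤ ∫ σ in a..b, f σ := by
  have h1 : (∫ σ in p..q, K * (σ - p)) ≤ ∫ σ in p..q, f σ := by
    apply intervalIntegral.integral_mono_on hpq _ (hfc.intervalIntegrable p q) hbd
    exact (continuous_const.mul (continuous_id.sub continuous_const)).intervalIntegrable p q
  have h2 : (∫ σ in p..q, f σ) ≤ ∫ σ in a..b, f σ := by
    apply intervalIntegral.integral_mono_interval hap hpq hqb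
    · exact Filter.Eventually.of_forall fun x => hfnn x
    · exact hfc.intervalIntegrable a b
  calc K * (q - p)^2 / 2 = ∫ σ in p..q, K * (σ - p) := (int_lin1 K p q).symm
    _ ≤ ∫ σ in p..q, f σ := h1
    _ ≤ ∫ σ in a..b, f σ := h2

private lemma step2 (f : ℝ → ℝ) (hfc : Continuous f) (hfnn : ∀ σ, 0 ≤ f σ)
    (K a b p q : ℝ) (hap : a ≤ p) (hpq : p ≤ q) (hqb : q ≤ b)
    (hbd : ∀ σ ∈ Set.Icc p q, K * (q - σ) ≤ f σ) :
    K * (q - p)^2 / 2 ≤ ∫ σ in a..b, f σ := by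
  have h1 : (∫ σ in p..q, K * (q - σ)) ≤ ∫ σ in p..q, f σ := by
    apply intervalIntegral.integral_mono_on hpq _ (hfc.intervalIntegrable p q) hbd
    exact (continuous_const.mul (continuous_const.sub continuous_id)).intervalIntegrable p q
  have h2 : (∫ σ in p..q, f σ) ≤ ∫ σ in a..b, f σ := by
    apply intervalIntegral.integral_mono_interval hap hpq hqb
    · exact Filter.Eventually.of_forall fun x => hfnn x
    · exact hfc.intervalIntegrable a b
  calc K * (q - p)^2 / 2 = ∫ σ in p..q, K * (q - σ) := (int_lin2 K p q).symm
    _ ≤ ∫ σ in p..q, f σ := h1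
    _ ≤ ∫ σ in a..b, f σ := h2

theorem stmt2 (c : ℝ) (hc : 0 < c) (F : ℝ → ℝ) (hF : Continuous F)
    (hFlb : ∀ s, c * (1 - |s|)^2 ≤ F s)
    (Q : ℝ → ℝ) (hQ : ∀ s, Q s = ∫ σ in (0:ℝ)..s, Real.sqrt (2 * F σ)) :
    ∃ c' > (0:ℝ), ∀ a b : ℝ, a ≤ b → c' * (b - a)^2 ≤ |Q b - Q a| := by
  set K : ℝ := Real.sqrt (2 * c) with hK
  have hKpos : 0 < K := Real.sqrt_pos.mpr (by linarith)
  set f : ℝ → ℝ := fun σ => Real.sqrt (2 * F σ) with hf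
  have hfc : Continuous f := (continuous_const.mul hF).sqrt
  have hfnn : ∀ σ, 0 ≤ f σ := fun σ => Real.sqrt_nonneg _
  have hkey : ∀ σ, K * abs (1 - abs σ) ≤ f σ := by
    intro σ
    have h1 : 2 * (c * (1 - (abs σ))^2) ≤ 2 * F σ := by linarith [hFlb σ]
    have h2 : Real.sqrt (2 * (c * (1 - (abs σ))^2)) ≤ f σ := Real.sqrt_le_sqrt h1
    have h3 : Real.sqrt (2 * (c * (1 - (abs σ))^2)) = K * abs (1 - abs σ) := by
      rw [show 2 * (c * (1 - (abs σ))^2) = (2 * c) * (1 - (abs σ))^2 by ring,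
        Real.sqrt_mul (by linarith), Real.sqrt_sq_eq_abs]
    linarith [h3 ▸ h2]
  refine ⟨K / 32, by positivity, fun a b hab => ?_⟩
  have hInt : Q b - Q a = ∫ σ in a..b, f σ := by
    rw [hQ a, hQ b]
    exact intervalIntegral.integral_interval_sub_left
      (hfc.intervalIntegrable 0 b) (hfc.intervalIntegrable 0 a)
  have hnn : 0 ≤ ∫ σ in a..b, f σ :=
    intervalIntegral.integral_nonneg hab fun x _ => hfnn x
  rw [hInt, abs_of_nonneg hnn]
  have hgoal : K * ((b - a)/4)^2 / 2 ≤ ∫ σ in a..b, f σ := by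
    rcases le_total 0 ((a + b)/2) with hm | hm
    · rcases le_total 1 ((a + 3*b)/4) with h1 | h1
      · -- on [(a+3b)/4, b], σ ≥ 1, bound K*(σ-p)
        have := step1 f hfc hfnn K a b ((a+3*b)/4) b (by linarith) (by linarith) le_rfl ?_
        · calc K * ((b - a)/4)^2 / 2 = K * (b - (a+3*b)/4)^2 / 2 := by ring_nf
            _ ≤ _ := this
        · intro σ hσ
          obtain ⟨hσ1, hσ2⟩ := hσ
          have hσ1' : (1:ℝ) ≤ σ := le_trans h1 hσ1
          have habs : abs (1 - abs σ) = σ - 1 := by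
            rw [abs_of_nonneg (by linarith : (0:ℝ) ≤ σ), abs_of_nonpos (by linarith)]
            ring
          have := hkey σ
          rw [habs] at this
          nlinarith [hKpos.le]
      · -- on [(a+b)/2, (a+3b)/4], 0 ≤ σ ≤ 1, bound K*(q-σ)
        have := step2 f hfc hfnn K a b ((a+b)/2) ((a+3*b)/4) (by linarith) (by linarith) (by linarith) ?_
        · calc K * ((b - a)/4)^2 / 2 = K * ((a+3*b)/4 - (a+b)/2)^2 / 2 := by ring_nf
            _ ≤ _ := this
        · intro σ hσ
          obtain ⟨hσ1, hσ2⟩ := hσ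
          have hσ0 : (0:ℝ) ≤ σ := le_trans hm hσ1
          have hσle1 : σ ≤ 1 := le_trans hσ2 h1
          have habs : abs (1 - abs σ) = 1 - σ := by
            rw [abs_of_nonneg hσ0, abs_of_nonneg (by linarith)]
          have := hkey σ
          rw [habs] at this
          nlinarith [hKpos.le]
    · rcases le_total ((3*a + b)/4) (-1) with h1 | h1
      · -- on [a, (3a+b)/4], σ ≤ -1, bound K*(q-σ)
        have := step2 f hfc hfnn K a b a ((3*a+b)/4) le_rfl (by linarith) (by linarith) ?_
        · calc K * ((b - a)/4)^2 / 2 = K * ((3*a+b)/4 - a)^2 / 2 := by ring_nf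
            _ ≤ _ := this
        · intro σ hσ
          obtain ⟨hσ1, hσ2⟩ := hσ
          have hσ1' : σ ≤ -1 := le_trans hσ2 h1
          have habs : abs (1 - abs σ) = -1 - σ := by
            rw [abs_of_nonpos (by linarith : σ ≤ 0), abs_of_nonpos (by linarith)]
            ring
          have := hkey σ
          rw [habs] at this
          nlinarith [hKpos.le]
      · -- on [(3a+b)/4, (a+b)/2], -1 ≤ σ ≤ 0, bound K*(σ-p)
        have := step1 f hfc hfnn K a b ((3*a+b)/4) ((a+b)/2) (by linarith) (by linarith) (by linarith) ?_
        · calc K * ((b - a)/4)^2 / 2 = K * ((a+b)/2 - (3*a+b)/4)^2 / 2 := by ring_nf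
            _ ≤ _ := this
        · intro σ hσ
          obtain ⟨hσ1, hσ2⟩ := hσ
          have hσ0 : σ ≤ 0 := le_trans hσ2 hm
          have hσm1 : (-1:ℝ) ≤ σ := le_trans h1 hσ1
          have habs : abs (1 - abs σ) = 1 + σ := by
            rw [abs_of_nonpos hσ0, abs_of_nonneg (by linarith)]
            ring
          have := hkey σ
          rw [habs] at this
          nlinarith [hKpos.le]
  calc K / 32 * (b - a)^2 = K * ((b - a)/4)^2 / 2 := by ring
    _ ≤ ∫ σ in a..b, f σ := hgoal
end

section
/- Let N ≥ 2, k = N - 1, and let g : ℝ → ℝᵏ be smooth. Let q : ℝᵏ → ℝᵏ be a smooth solution of -Δq + (|q|² - 1)q = 0, and let ε > 0. Writing x = (x¹, x^ν) ∈ ℝ × ℝᵏ, the function u(t,x) := q((x^ν - g(x¹ - t))/ε) solves the semilinear wave equation -∂_t² u + Δ_x u = ε⁻²(|u|² - 1)u on all of ℝ^{1+N}. -/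
/-- Second partial derivative of `f` along the `i`-th coordinate direction, at `x`. -/
noncomputable def pd2v {m : ℕ} (i : Fin m) (f : (Fin m → ℝ) → ℝ) (x : Fin m → ℝ) : ℝ :=
  deriv (deriv (fun s => f (Function.update x i s))) (x i)

lemma lemA (F : ℝ → ℝ) (a t : ℝ) :
    deriv (deriv (fun τ => F (a - τ))) t = deriv (deriv F) (a - t) := by
  have h1 : deriv (fun τ => F (a - τ)) = fun τ => -deriv F (a - τ) := by
    funext τ; exact deriv_comp_const_sub F a τ
  rw [h1]
  have h2 : deriv (fun τ => -deriv F (a - τ)) t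
      = -deriv (fun τ => deriv F (a - τ)) t := deriv.neg
  rw [h2, deriv_comp_const_sub (deriv F) a t, neg_neg]

lemma lemB (F : ℝ → ℝ) (t x1 : ℝ) :
    deriv (deriv (fun s => F (s - t))) x1 = deriv (deriv F) (x1 - t) := by
  have h1 : deriv (fun s => F (s - t)) = fun s => deriv F (s - t) := by
    funext s; exact deriv_comp_sub_const F t s
  rw [h1, deriv_comp_sub_const (deriv F) t x1]

lemma lemC (H : ℝ → ℝ) (hH : ContDiff ℝ (⊤ : ℕ∞) H) (c ε : ℝ) (r : ℝ) :
    deriv (deriv (fun s => H ((s - c) / ε))) r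
      = ε⁻¹ ^ 2 * deriv (deriv H) ((r - c) / ε) := by
  have haff : ∀ s : ℝ, HasDerivAt (fun s : ℝ => (s - c) / ε) ε⁻¹ s := by
    intro s
    simpa [one_div] using ((hasDerivAt_id s).sub_const c).div_const ε
  have hH2 : ContDiff ℝ ((⊤ : ℕ∞) : WithTop ℕ∞) H := hH.of_le (by simp)
  have hH' : ContDiff ℝ ((⊤ : ℕ∞) : WithTop ℕ∞) (deriv H) := (contDiff_infty_iff_deriv.mp hH2).2
  have h1 : deriv (fun s => H ((s - c) / ε)) = fun s => deriv H ((s - c) / ε) * ε⁻¹ := by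
    funext s
    exact (((hH.differentiable (by simp)) _).hasDerivAt.comp s (haff s)).deriv
  rw [h1]
  have h2 : HasDerivAt (fun s => deriv H ((s - c) / ε) * ε⁻¹)
      ((deriv (deriv H) ((r - c) / ε) * ε⁻¹) * ε⁻¹) r :=
    ((((hH'.differentiable (by simp)) _).hasDerivAt.comp r (haff r))).mul_const ε⁻¹
  rw [h2.deriv]; ring

theorem stmt5 (N : ℕ) (hN : 2 ≤ N) (k : ℕ) (hk : k = N - 1)
    (g : ℝ → Fin k → ℝ) (hg : ContDiff ℝ (⊤ : ℕ∞) g)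
    (q : (Fin k → ℝ) → Fin k → ℝ) (hq : ContDiff ℝ (⊤ : ℕ∞) q)
    (hqeq : ∀ (z : Fin k → ℝ) (i : Fin k),
      -(∑ j, pd2v j (fun y => q y i) z) + ((∑ l, (q z l)^2) - 1) * q z i = 0)
    (ε : ℝ) (hε : 0 < ε) (t x1 : ℝ) (xv : Fin k → ℝ) (i : Fin k) :
    -(deriv (deriv (fun τ => q (fun j => (xv j - g (x1 - τ) j) / ε) i)) t)
      + deriv (deriv (fun s => q (fun j => (xv j - g (s - t) j) / ε) i)) x1
      + (∑ j, pd2v j (fun y => q (fun l => (y l - g (x1 - t) l) / ε) i) xv)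
      = ε⁻¹^2 * (((∑ l, (q (fun j => (xv j - g (x1 - t) j) / ε) l)^2) - 1)
          * q (fun j => (xv j - g (x1 - t) j) / ε) i) := by
  set c : Fin k → ℝ := g (x1 - t) with hc
  set z : Fin k → ℝ := fun l => (xv l - c l) / ε with hz
  set F : ℝ → ℝ := fun s => q (fun j => (xv j - g s j) / ε) i with hF
  -- time/x1 terms cancel
  have e1 : deriv (deriv (fun τ => q (fun j => (xv j - g (x1 - τ) j) / ε) i)) t
      = deriv (deriv F) (x1 - t) := lemA F x1 t
  have e2 : deriv (deriv (fun s => q (fun j => (xv j - g (s - t) j) / ε) i)) x1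
      = deriv (deriv F) (x1 - t) := lemB F t x1
  -- spatial terms: each pd2v rescales
  have hqi : ContDiff ℝ (⊤ : ℕ∞) (fun y => q y i) := contDiff_pi.mp hq i
  have e3 : ∀ j : Fin k,
      pd2v j (fun y => q (fun l => (y l - g (x1 - t) l) / ε) i) xv
        = ε⁻¹ ^ 2 * pd2v j (fun y => q y i) z := by
    intro j
    have key : ∀ s : ℝ, (fun l => (Function.update xv j s l - c l) / ε)
        = Function.update z j ((s - c j) / ε) := by
      intro s; funext l
      rcases eq_or_ne l j with h | h
      · subst h; simp
      · simp [Function.update_apply, h, hz]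
    have hH : ContDiff ℝ (⊤ : ℕ∞) (fun r => q (Function.update z j r) i) :=
      hqi.comp (contDiff_update ((⊤ : ℕ∞) : WithTop ℕ∞) z j)
    calc pd2v j (fun y => q (fun l => (y l - g (x1 - t) l) / ε) i) xv
        = deriv (deriv (fun s => q (Function.update z j ((s - c j) / ε)) i)) (xv j) := by
          unfold pd2v
          have heq : (fun s : ℝ => q (fun l => (Function.update xv j s l - c l) / ε) i)
              = fun s => q (Function.update z j ((s - c j) / ε)) i := by
            funext s; rw [key s]
          show deriv (deriv fun s =>
            q (fun l => (Function.update xv j s l - c l) / ε) i) (xv j) = _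
          rw [heq]
      _ = ε⁻¹ ^ 2 * deriv (deriv (fun r => q (Function.update z j r) i)) ((xv j - c j) / ε) :=
          lemC (fun r => q (Function.update z j r) i) hH (c j) ε (xv j)
      _ = ε⁻¹ ^ 2 * pd2v j (fun y => q y i) z := by
          unfold pd2v
          congr 1
  rw [e1, e2]
  simp only [← hc] at e3
  simp only [e3]
  rw [← Finset.mul_sum]
  have hs : ∑ j, pd2v j (fun y => q y i) z = ((∑ l, (q z l) ^ 2) - 1) * q z i := by
    have := hqeq z i; linarith
  rw [hs]
  show -deriv (deriv F) (x1 - t) + deriv (deriv F) (x1 - t) + _ = _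
  ring
end

section
/- Let g : ℝ → ℝ be smooth with bounded derivative, and for ε ∈ (0,1] let g_ε, u_ε and Γ⁰ be as follows: Γ^ε := {(t, s, g_ε(s-t)) : t,s ∈ ℝ} ⊂ ℝ^{1+2}, q the heteroclinic profile with -q'' + F'(q) = 0, q(±∞) = ±1, and u_ε(t, x¹, x²) := q((x² - g_ε(x¹ - t))/ε). Then the energy-momentum tensor of u_ε equals 𝒯_ε(u_ε) = ε⁻² q'((x²-g_ε(x¹-t))/ε)² · M(g_ε'(x¹-t)), where M(p) is the 3×3 matrix [[1+p², -p², p], [p², 1-p², p], [-p, p, 0]]. -/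
open Filter

/-- First partial derivative along the `i`-th coordinate. -/
noncomputable def pd {m : ℕ} (i : Fin m) (f : (Fin m → ℝ) → ℝ) (x : Fin m → ℝ) : ℝ :=
  deriv (fun s => f (Function.update x i s)) (x i)

/-- Energy-momentum tensor of a scalar field on ℝ^{1+2}:
`𝒯^α_{ε,β}(u) = δ^α_β ((1/2) η^{γδ} u_{x^γ} u_{x^δ} + ε⁻²F(u)) - η^{αγ} u_{x^γ} u_{x^β}`,
with η = diag(-1,1,1) and coordinate 0 playing the role of time. -/
noncomputable def emT2 (F : ℝ → ℝ) (ε : ℝ) (u : (Fin 3 → ℝ) → ℝ)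
    (α β : Fin 3) (z : Fin 3 → ℝ) : ℝ :=
  (if α = β then
      (1/2) * (∑ γ, (if γ = 0 then (-1:ℝ) else 1) * (pd γ u z)^2) + ε⁻¹^2 * F (u z)
    else 0)
  - (if α = 0 then (-1:ℝ) else 1) * pd α u z * pd β u z

theorem stmt16 (c : ℝ) (hc : 0 < c) (F q g : ℝ → ℝ)
    (hF : ContDiff ℝ (⊤ : ℕ∞) F) (hF1 : F 1 = 0) (hFm1 : F (-1) = 0)
    (hFlb : ∀ s, c * (1 - |s|)^2 ≤ F s)
    -- q is the heteroclinic profile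
    (hq : ContDiff ℝ (⊤ : ℕ∞) q)
    (hODE : ∀ x, - deriv (deriv q) x + deriv F (q x) = 0)
    (hlim1 : Tendsto q atTop (nhds 1)) (hlim2 : Tendsto q atBot (nhds (-1)))
    (hq' : ∀ y, (deriv q y)^2 = 2 * F (q y))
    -- g smooth with bounded derivative
    (hg : ContDiff ℝ (⊤ : ℕ∞) g) (Mg : ℝ) (hgb : ∀ s, |deriv g s| ≤ Mg)
    (ε : ℝ) (hε : ε ∈ Set.Ioc (0:ℝ) 1) :
    ∀ (t x1 x2 : ℝ) (α β : Fin 3),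
      emT2 F ε (fun z => q ((z 2 - g (z 1 - z 0)) / ε)) α β ![t, x1, x2]
        = ε⁻¹^2 * (deriv q ((x2 - g (x1 - t)) / ε))^2 *
          (!![1 + (deriv g (x1 - t))^2, -(deriv g (x1 - t))^2, deriv g (x1 - t);
              (deriv g (x1 - t))^2, 1 - (deriv g (x1 - t))^2, deriv g (x1 - t);
              -(deriv g (x1 - t)), deriv g (x1 - t), 0] α β) := by

  intro t x1 x2 α β
  have hε0 : ε ≠ 0 := ne_of_gt hε.1
  set p := deriv g (x1 - t) with hp
  set w := (x2 - g (x1 - t)) / ε with hw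
  set Q := deriv q w with hQ
  have hqd : ∀ y, HasDerivAt q (deriv q y) y := fun y =>
    (hq.differentiable (by simp) y).hasDerivAt
  have hgd : ∀ y, HasDerivAt g (deriv g y) y := fun y =>
    (hg.differentiable (by simp) y).hasDerivAt
  have h0 : pd 0 (fun z => q ((z 2 - g (z 1 - z 0)) / ε)) ![t, x1, x2] = Q * (p / ε) := by
    have heq : (fun s => (fun z : Fin 3 → ℝ => q ((z 2 - g (z 1 - z 0)) / ε))
        (Function.update ![t, x1, x2] 0 s)) = fun s => q ((x2 - g (x1 - s)) / ε) := by
      funext s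
      simp [Function.update_apply]
    have hin : HasDerivAt (fun s => (x2 - g (x1 - s)) / ε) (-(p * (-1)) / ε) t := by
      have h1 : HasDerivAt (fun s : ℝ => x1 - s) (-1) t := by
        simpa using (hasDerivAt_id t).const_sub x1
      have h2 : HasDerivAt (fun s => g (x1 - s)) (p * (-1)) t := (hgd (x1 - t)).comp t h1
      exact (h2.const_sub x2).div_const ε
    have hcomp : HasDerivAt (fun s => q ((x2 - g (x1 - s)) / ε)) (Q * (-(p * (-1)) / ε)) t :=
      (hqd w).comp t hin
    rw [pd, heq]
    simp only [Matrix.cons_val_zero]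
    rw [hcomp.deriv]
    ring
  have h1 : pd 1 (fun z => q ((z 2 - g (z 1 - z 0)) / ε)) ![t, x1, x2] = Q * (-p / ε) := by
    have heq : (fun s => (fun z : Fin 3 → ℝ => q ((z 2 - g (z 1 - z 0)) / ε))
        (Function.update ![t, x1, x2] 1 s)) = fun s => q ((x2 - g (s - t)) / ε) := by
      funext s
      simp [Function.update_apply]
    have hin : HasDerivAt (fun s => (x2 - g (s - t)) / ε) (-(p * 1) / ε) x1 := by
      have h1 : HasDerivAt (fun s : ℝ => s - t) 1 x1 := by
        simpa using (hasDerivAt_id x1).sub_const t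
      have h2 : HasDerivAt (fun s => g (s - t)) (p * 1) x1 := (hgd (x1 - t)).comp x1 h1
      exact (h2.const_sub x2).div_const ε
    have hcomp : HasDerivAt (fun s => q ((x2 - g (s - t)) / ε)) (Q * (-(p * 1) / ε)) x1 :=
      (hqd w).comp x1 hin
    rw [pd, heq]
    simp only [Matrix.cons_val_one, Matrix.head_cons, Matrix.cons_val_zero]
    rw [hcomp.deriv]
    ring
  have h2 : pd 2 (fun z => q ((z 2 - g (z 1 - z 0)) / ε)) ![t, x1, x2] = Q * (1 / ε) := by
    have heq : (fun s => (fun z : Fin 3 → ℝ => q ((z 2 - g (z 1 - z 0)) / ε))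
        (Function.update ![t, x1, x2] 2 s)) = fun s => q ((s - g (x1 - t)) / ε) := by
      funext s
      simp [Function.update_apply]
    have hin : HasDerivAt (fun s : ℝ => (s - g (x1 - t)) / ε) (1 / ε) x2 := by
      simpa using ((hasDerivAt_id x2).sub_const (g (x1 - t))).div_const ε
    have hcomp : HasDerivAt (fun s => q ((s - g (x1 - t)) / ε)) (Q * (1 / ε)) x2 :=
      (hqd w).comp x2 hin
    rw [pd, heq]
    simp only [Matrix.cons_val_two, Matrix.tail_cons, Matrix.head_cons]
    rw [hcomp.deriv]
  have hFw : F (q w) = Q ^ 2 / 2 := by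
    have := hq' w
    rw [← hQ] at this
    linarith
  have huz : (fun z : Fin 3 → ℝ => q ((z 2 - g (z 1 - z 0)) / ε)) ![t, x1, x2] = q w := by
    simp [hw]
  have hFw' : F (q ((x2 - g (x1 - t)) / ε)) = Q ^ 2 / 2 := hFw
  fin_cases α <;> fin_cases β <;>
    simp [emT2, Fin.sum_univ_three, h0, h1, h2, huz, hFw, hFw', Matrix.cons_val_zero,
      Matrix.cons_val_one, Matrix.head_cons] <;>
    field_simp <;> ring
end

section
/- Let (g^{αβ}) be a symmetric (1+N)×(1+N) matrix with signature such that the matrix (a^{αβ}) defined by a^{00} = -g^{00}, a^{ij} = g^{ij} for i,j ≥ 1, a^{0j} = a^{i0} = 0, is positive semidefinite. Suppose n ∈ ℝ^{1+N} satisfies g^{αβ} n_α n_β = 0 and n_0 > 0, and F ≥ 0. Then for any ξ ∈ ℝ^{1+N}, n_0 [(1/2) g^{αβ} ξ_α ξ_β + F] - ξ_0 g^{αβ} n_α ξ_β ≥ 0. (Hint: write ζ := ξ - (ξ_0/n_0) n, note ζ_0 = 0, and the expression equals (n_0/2) g^{αβ} ζ_α ζ_β + n_0 F = (n_0/2) a^{αβ}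 ζ_α ζ_β + n_0 F ≥ 0.) -/
/-!
Put `ζ := ξ - (ξ₀ / n₀) n`. Since `n` is null and `g` symmetric, the expression equals
`(n₀ / 2) g(ζ, ζ) + n₀ F`, and because `ζ₀ = 0` the form `g(ζ, ζ)` coincides with the
positive semidefinite form `a(ζ, ζ)`.
-/

open Matrix

section QuadraticForm

variable {ι : Type*} [Fintype ι]

lemma sum_sum_mul_mul_eq_dotProduct_mulVec (g : Matrix ι ι ℝ) (x y : ι → ℝ) :
    ∑ α, ∑ β, g α β * x α * y β = x ⬝ᵥ g *ᵥ y := by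
  simp only [dotProduct, mulVec, Finset.mul_sum]
  exact Finset.sum_congr rfl fun _ _ => Finset.sum_congr rfl fun _ _ => by ring

lemma dotProduct_mulVec_comm_of_isSymm {g : Matrix ι ι ℝ} (hg : g.IsSymm) (x y : ι → ℝ) :
    x ⬝ᵥ g *ᵥ y = y ⬝ᵥ g *ᵥ x := by
  rw [dotProduct_mulVec, dotProduct_comm, ← vecMul_transpose, hg.eq]

lemma dotProduct_mulVec_sub_smul_self {g : Matrix ι ι ℝ} (hg : g.IsSymm) (x y : ι → ℝ) (c : ℝ) :
    (x - c • y) ⬝ᵥ g *ᵥ (x - c • y)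
      = x ⬝ᵥ g *ᵥ x - 2 * c * (y ⬝ᵥ g *ᵥ x) + c ^ 2 * (y ⬝ᵥ g *ᵥ y) := by
  simp only [mulVec_sub, mulVec_smul, sub_dotProduct, dotProduct_sub, smul_dotProduct,
    dotProduct_smul, smul_eq_mul, dotProduct_mulVec_comm_of_isSymm hg x y]
  ring

lemma flux_eq_dotProduct_mulVec_sub_smul {g : Matrix ι ι ℝ} (hg : g.IsSymm) {n : ι → ℝ}
    (hnull : n ⬝ᵥ g *ᵥ n = 0) {i : ι} (hni : n i ≠ 0) (ξ : ι → ℝ) :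
    n i * (1 / 2 * (ξ ⬝ᵥ g *ᵥ ξ)) - ξ i * (n ⬝ᵥ g *ᵥ ξ)
      = n i / 2 * ((ξ - (ξ i / n i) • n) ⬝ᵥ g *ᵥ (ξ - (ξ i / n i) • n)) := by
  rw [dotProduct_mulVec_sub_smul_self hg, hnull]
  field_simp
  ring

lemma dotProduct_mulVec_eq_of_apply_eq_zero {a g : Matrix ι ι ℝ} {i : ι}
    (hag : ∀ α β, α ≠ i → β ≠ i → a α β = g α β) {ζ : ι → ℝ} (hζ : ζ i = 0) :
    ζ ⬝ᵥ a *ᵥ ζ = ζ ⬝ᵥ g *ᵥ ζ := by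
  simp only [← sum_sum_mul_mul_eq_dotProduct_mulVec]
  refine Finset.sum_congr rfl fun α _ => Finset.sum_congr rfl fun β _ => ?_
  rcases eq_or_ne α i with rfl | hα
  · simp [hζ]
  rcases eq_or_ne β i with rfl | hβ
  · simp [hζ]
  rw [hag α β hα hβ]

end QuadraticForm

theorem stmt18 (N : ℕ) (g : Matrix (Fin (N+1)) (Fin (N+1)) ℝ)
    (hsym : ∀ α β, g α β = g β α)
    (a : Matrix (Fin (N+1)) (Fin (N+1)) ℝ)
    (ha : ∀ α β, a α β =
      if α = 0 ∧ β = 0 then -g 0 0 else if α = 0 ∨ β = 0 then 0 else g α β)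
    -- (a^{αβ}) positive semidefinite
    (hpsd : ∀ ξ : Fin (N+1) → ℝ, 0 ≤ ∑ α, ∑ β, a α β * ξ α * ξ β)
    -- n is a null covector with n₀ > 0
    (n : Fin (N+1) → ℝ) (hnull : ∑ α, ∑ β, g α β * n α * n β = 0) (hn0 : 0 < n 0)
    (F : ℝ) (hF : 0 ≤ F) :
    ∀ ξ : Fin (N+1) → ℝ,
      0 ≤ n 0 * ((1/2) * (∑ α, ∑ β, g α β * ξ α * ξ β) + F)
            - ξ 0 * ∑ α, ∑ β, g α β * n α * ξ β := by
  intro ξ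
  simp only [sum_sum_mul_mul_eq_dotProduct_mulVec] at hpsd hnull ⊢
  have hg : g.IsSymm := IsSymm.ext fun α β => hsym β α
  set ζ := ξ - (ξ 0 / n 0) • n
  have hζ0 : ζ 0 = 0 := by simp [ζ, hn0.ne']
  have hζ : 0 ≤ ζ ⬝ᵥ g *ᵥ ζ := by
    rw [← dotProduct_mulVec_eq_of_apply_eq_zero (a := a)
      (fun α β hα hβ => by simp [ha, hα, hβ]) hζ0]
    exact hpsd ζ
  have hflux := flux_eq_dotProduct_mulVec_sub_smul hg hnull hn0.ne' ξ
  linarith [mul_nonneg (half_pos hn0).le hζ, mul_nonneg hn0.le hF]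
end
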